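/- Let G be a finite group. There exists n ≥ 2 such that 𝒫(G) is isomorphic to the path graph on n vertices if and only if G is cyclic of order p·q for two distinct primes p, q. -/

import Mathlib

open SimpleGraph

/-- The coprime graph of subgroups of a group `G`: vertices are the proper nontrivial
subgroups of `G`, and two distinct vertices are adjacent iff their orders are coprime. -/
def coprimeGraph (G : Type*) [Group G] :
    SimpleGraph {H : Subgroup G // H ≠ ⊥ ∧ H ≠ ⊤} where
  Adj H K := H ≠ K ∧ Nat.Coprime (Nat.card H.1) (Nat.card K.1)
  symm := ⟨fun _ _ h => ⟨h.1.symm, h.2.symm⟩⟩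
  loopless := ⟨fun _ h => h.1 rfl⟩

/-!
An edge gives two primes `p ≠ q` dividing `|G|`, and a third prime `r` would give a triangle of
subgroups of orders `p`, `q`, `r`. A proper subgroup of order divisible by `pq` would be isolated,
since a prime factor of a neighbour's order is `p` or `q`. Hence every nontrivial `p`-subgroup is
adjacent to every nontrivial `q`-subgroup, and the absence of 4-cycles makes those of one side,
say the `p`-subgroups, unique: the Sylow `p`-subgroup `P` is normal of order `p`. If `q² ∣ |G|`,
a subgroup of order `q` of `G ⧸ P` pulls back to a proper subgroup of order divisible by `pq`;
so `|G| = pq`. The Sylow `q`-subgroups are neighbours of `P`, so there are at most two of them,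
hence, their number being `1` mod `q`, only one; with both Sylow subgroups normal, `G` is cyclic.

Conversely, a cyclic group of order `pq` has exactly two proper nontrivial subgroups, of orders
`p` and `q`, and they are adjacent.
-/

theorem Nat.Prime.not_sq_dvd_self {p : ℕ} (hp : p.Prime) : ¬ p ^ 2 ∣ p := fun h =>
  hp.ne_one (Nat.isUnit_iff.1 (hp.prime.squarefree p (by rwa [← sq])))

theorem Nat.eq_or_eq_of_dvd_prime_mul {p q d : ℕ} (hp : p.Prime) (hq : q.Prime) (hd : d ∣ p * q)
    (hd1 : d ≠ 1) (hdpq : d ≠ p * q) : d = p ∨ d = q := by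
  obtain ⟨a, b, ha, hb, rfl⟩ := Nat.dvd_mul.1 hd
  rcases (Nat.dvd_prime hp).1 ha with rfl | rfl <;> rcases (Nat.dvd_prime hq).1 hb with rfl | rfl
  all_goals simp_all

theorem Nat.eq_mul_of_not_sq_dvd {n p q : ℕ} (hp : p.Prime) (hq : q.Prime) (hpq : p ≠ q)
    (hprimes : ∀ r, r.Prime → r ∣ n → r = p ∨ r = q) (hpn : p ∣ n) (hqn : q ∣ n)
    (hpp : ¬ p ^ 2 ∣ n) (hqq : ¬ q ^ 2 ∣ n) : n = p * q := by
  obtain ⟨k, rfl⟩ := ((Nat.coprime_primes hp hq).2 hpq).mul_dvd_of_dvd_of_dvd hpn hqn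
  suffices k = 1 by rw [this, mul_one]
  refine Nat.eq_one_iff_not_exists_prime_dvd.2 fun r hr ⟨m, hm⟩ => ?_
  subst hm
  rcases hprimes r hr (Dvd.intro (p * q * m) (by ring)) with rfl | rfl
  · exact hpp ⟨q * m, by ring⟩
  · exact hqq ⟨p * m, by ring⟩

theorem IsPGroup.not_dvd_card {G : Type*} [Group G] [Finite G] {p q : ℕ} [Fact p.Prime]
    (hG : IsPGroup p G) (hq : q.Prime) (hpq : p ≠ q) : ¬ q ∣ Nat.card G := by
  obtain ⟨k, hk⟩ := IsPGroup.iff_card.1 hG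
  rw [hk]
  exact fun h => hpq ((Nat.prime_dvd_prime_iff_eq hq Fact.out).1 (hq.dvd_of_dvd_pow h)).symm

namespace Subgroup

variable {G : Type*} [Group G]

theorem ne_bot_of_prime_dvd_card {H : Subgroup G} {r : ℕ} (hr : r.Prime)
    (hrH : r ∣ Nat.card H) : H ≠ ⊥ := by
  rintro rfl
  exact hr.ne_one (by rwa [card_bot, Nat.dvd_one] at hrH)

theorem ne_top_of_not_dvd_card {H : Subgroup G} {s : ℕ} (hsG : s ∣ Nat.card G)
    (hsH : ¬ s ∣ Nat.card H) : H ≠ ⊤ := by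
  rintro rfl
  exact hsH (by rwa [card_top])

theorem exists_ne_top_le_and_dvd_card [Finite G] {N : Subgroup G} [N.Normal] {q : ℕ}
    [Fact q.Prime] (hq : q ^ 2 ∣ Nat.card (G ⧸ N)) :
    ∃ M : Subgroup G, M ≠ ⊤ ∧ N ≤ M ∧ q ∣ Nat.card M := by
  obtain ⟨S, hS⟩ := Sylow.exists_subgroup_card_pow_prime (G := G ⧸ N) q (n := 1)
    ((pow_dvd_pow q one_le_two).trans hq)
  rw [pow_one] at hS
  have hmap := map_comap_eq_self_of_surjective (QuotientGroup.mk'_surjective N) S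
  refine ⟨S.comap (QuotientGroup.mk' N), fun h => ?_, ?_, ?_⟩
  · rw [h, map_top_of_surjective _ (QuotientGroup.mk'_surjective N)] at hmap
    rw [← hmap, card_top] at hS
    exact (Fact.out : q.Prime).not_sq_dvd_self (hS ▸ hq)
  · simpa using ker_le_comap (QuotientGroup.mk' N) S
  · have := card_map_dvd (S.comap (QuotientGroup.mk' N)) (QuotientGroup.mk' N)
    rwa [hmap, hS] at this

end Subgroup

theorem IsCyclic.subgroup_eq_of_card_eq {G : Type*} [Group G] [Finite G] [IsCyclic G]
    {H K : Subgroup G} (h : Nat.card H = Nat.card K) : H = K := by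
  classical
  have := Fintype.ofFinite G
  -- In a cyclic group `x ^ d = 1` has at most `d` solutions, so a subgroup of order `d` is
  -- exactly its solution set.
  suffices key : ∀ L : Subgroup G,
      (L : Set G).toFinset = Finset.univ.filter (· ^ Nat.card L = 1) by
    apply SetLike.coe_injective
    rw [← Set.toFinset_inj, key, key, h]
  intro L
  refine Finset.eq_of_subset_of_card_le (fun x hx => ?_) ?_
  · rw [Set.mem_toFinset] at hx
    have := congrArg Subtype.val (pow_card_eq_one' (x := (⟨x, hx⟩ : L)))
    rw [Subgroup.coe_pow, Subgroup.coe_one] at this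
    exact Finset.mem_filter.2 ⟨Finset.mem_univ x, this⟩
  · rw [← Nat.card_eq_card_toFinset]
    exact IsCyclic.card_pow_eq_one_le Nat.card_pos

namespace Sylow

variable {G : Type*} [Group G] [Finite G]

theorem subsingleton_of_forall_eq_or_eq_or_eq {p : ℕ} [Fact p.Prime]
    (h : ∀ S T U : Sylow p G, S = T ∨ S = U ∨ T = U) : Subsingleton (Sylow p G) := by
  rw [← Finite.card_le_one_iff_subsingleton]
  by_contra! h1
  have hp : p ≤ Nat.card (Sylow p G) - 1 := Nat.le_of_dvd (by omega)
    ((Nat.modEq_iff_dvd' h1.le).1 (card_sylow_modEq_one p G).symm)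
  have := Fintype.ofFinite (Sylow p G)
  obtain ⟨S, T, U, hST, hSU, hTU⟩ := Fintype.two_lt_card_iff (α := Sylow p G) |>.1
    (by have := (Fact.out : p.Prime).two_le; rw [← Nat.card_eq_fintype_card]; omega)
  exact (h S T U).elim hST (Or.elim · hSU hTU)

theorem coe_ne_bot_and_ne_top {p q : ℕ} [Fact p.Prime] (S : Sylow p G) (hq : q.Prime)
    (hpq : p ≠ q) (hpG : p ∣ Nat.card G) (hqG : q ∣ Nat.card G) :
    (S : Subgroup G) ≠ ⊥ ∧ (S : Subgroup G) ≠ ⊤ :=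
  ⟨Subgroup.ne_bot_of_prime_dvd_card Fact.out (S.dvd_card_of_dvd_card hpG),
    Subgroup.ne_top_of_not_dvd_card hqG (S.isPGroup'.not_dvd_card hq hpq)⟩

end Sylow

theorem isCyclic_of_subsingleton_sylow {G : Type*} [Group G] [Finite G] {p q : ℕ}
    [Fact p.Prime] [Fact q.Prime] [Subsingleton (Sylow p G)] [Subsingleton (Sylow q G)]
    (hpq : p ≠ q) (hG : Nat.card G = p * q) : IsCyclic G := by
  let P : Sylow p G := default
  let Q : Sylow q G := default
  obtain ⟨x, hx⟩ :=
    exists_prime_orderOf_dvd_card' p (P.dvd_card_of_dvd_card (hG ▸ dvd_mul_right p q))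
  obtain ⟨y, hy⟩ :=
    exists_prime_orderOf_dvd_card' q (Q.dvd_card_of_dvd_card (hG ▸ dvd_mul_left q p))
  rw [← Subgroup.orderOf_coe] at hx hy
  have hxy : Commute (x : G) y :=
    Subgroup.commute_of_normal_of_disjoint _ _ P.normal_of_subsingleton Q.normal_of_subsingleton
      (IsPGroup.disjoint_of_ne p q hpq _ _ P.isPGroup' Q.isPGroup') _ _ x.2 y.2
  have hcop : (orderOf (x : G)).Coprime (orderOf (y : G)) := by
    rw [hx, hy]
    exact (Nat.coprime_primes Fact.out Fact.out).2 hpq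
  refine isCyclic_of_orderOf_eq_card (x * y : G) ?_
  rw [hxy.orderOf_mul_eq_mul_orderOf_of_coprime hcop, hx, hy, hG]

namespace SimpleGraph

structure IsPathLike {V : Type*} (Γ : SimpleGraph V) : Prop where
  nonempty : Nonempty V
  exists_adj (v : V) : ∃ w, Γ.Adj v w
  no_triangle {a b c : V} : Γ.Adj a b → Γ.Adj a c → ¬ Γ.Adj b c
  no_claw {v a b c : V} : Γ.Adj v a → Γ.Adj v b → Γ.Adj v c → a = b ∨ a = c ∨ b = c
  no_square {a b c d : V} : Γ.Adj a c → Γ.Adj a d → Γ.Adj b c → Γ.Adj b d → a = b ∨ c = d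

theorem IsPathLike.of_iso {V W : Type*} {Γ : SimpleGraph V} {Δ : SimpleGraph W} (e : Γ ≃g Δ)
    (h : Δ.IsPathLike) : Γ.IsPathLike where
  nonempty := h.nonempty.map e.symm
  exists_adj v := by
    obtain ⟨w, hw⟩ := h.exists_adj (e v)
    exact ⟨e.symm w, e.map_adj_iff.1 (by simpa using hw)⟩
  no_triangle hab hac hbc :=
    h.no_triangle (e.map_adj_iff.2 hab) (e.map_adj_iff.2 hac) (e.map_adj_iff.2 hbc)
  no_claw ha hb hc := by
    simpa using h.no_claw (e.map_adj_iff.2 ha) (e.map_adj_iff.2 hb) (e.map_adj_iff.2 hc)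
  no_square hac had hbc hbd := by
    simpa using h.no_square (e.map_adj_iff.2 hac) (e.map_adj_iff.2 had) (e.map_adj_iff.2 hbc)
      (e.map_adj_iff.2 hbd)

theorem isPathLike_pathGraph {n : ℕ} (hn : 2 ≤ n) : (pathGraph n).IsPathLike where
  nonempty := ⟨⟨0, by omega⟩⟩
  exists_adj v := by
    by_cases hv : v.val + 1 < n
    · exact ⟨⟨v + 1, hv⟩, pathGraph_adj.2 (Or.inl rfl)⟩
    · exact ⟨⟨v - 1, by omega⟩, pathGraph_adj.2 (Or.inr (by simp; omega))⟩
  no_triangle hab hac hbc := by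
    rw [pathGraph_adj] at hab hac hbc
    omega
  no_claw ha hb hc := by
    simp only [pathGraph_adj, Fin.ext_iff] at ha hb hc ⊢
    omega
  no_square hac had hbc hbd := by
    simp only [pathGraph_adj, Fin.ext_iff] at hac had hbc hbd ⊢
    omega

end SimpleGraph

section CoprimeGraph

variable {G : Type*} [Group G]

theorem coprimeGraph_adj_iff {H K : {H : Subgroup G // H ≠ ⊥ ∧ H ≠ ⊤}} :
    (coprimeGraph G).Adj H K ↔ (Nat.card H.1).Coprime (Nat.card K.1) := by
  refine ⟨And.right, fun h => ⟨?_, h⟩⟩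
  rintro rfl
  exact H.2.1 (Subgroup.card_eq_one.1 ((Nat.coprime_self _).1 h))

theorem exists_primes_dvd_card_of_isPathLike (hΓ : (coprimeGraph G).IsPathLike) :
    ∃ p q : ℕ, p.Prime ∧ q.Prime ∧ p ≠ q ∧ p ∣ Nat.card G ∧ q ∣ Nat.card G := by
  obtain ⟨v⟩ := hΓ.nonempty
  obtain ⟨w, hvw⟩ := hΓ.exists_adj v
  obtain ⟨p, hp, hpv⟩ := Nat.exists_prime_and_dvd (mt Subgroup.card_eq_one.1 v.2.1)
  obtain ⟨q, hq, hqw⟩ := Nat.exists_prime_and_dvd (mt Subgroup.card_eq_one.1 w.2.1)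
  refine ⟨p, q, hp, hq, ?_, hpv.trans v.1.card_subgroup_dvd_card,
    hqw.trans w.1.card_subgroup_dvd_card⟩
  rintro rfl
  exact hp.ne_one (Nat.eq_one_of_dvd_coprimes (coprimeGraph_adj_iff.1 hvw) hpv hqw)

theorem not_dvd_card_of_dvd_card (hΓ : (coprimeGraph G).IsPathLike) {p q : ℕ} (hp : p.Prime)
    (hprimes : ∀ r, r.Prime → r ∣ Nat.card G → r = p ∨ r = q) {H : Subgroup G} (hH : H ≠ ⊤)
    (hpH : p ∣ Nat.card H) : ¬ q ∣ Nat.card H := by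
  intro hqH
  obtain ⟨K, hK⟩ := hΓ.exists_adj ⟨H, Subgroup.ne_bot_of_prime_dvd_card hp hpH, hH⟩
  obtain ⟨r, hr, hrK⟩ := Nat.exists_prime_and_dvd (mt Subgroup.card_eq_one.1 K.2.1)
  have hrH : r ∣ Nat.card H := by
    rcases hprimes r hr (hrK.trans K.1.card_subgroup_dvd_card) with rfl | rfl <;> assumption
  exact hr.ne_one (Nat.eq_one_of_dvd_coprimes (coprimeGraph_adj_iff.1 hK) hrH hrK)

theorem coprime_card_of_dvd_of_dvd {p q : ℕ}
    (hprimes : ∀ r, r.Prime → r ∣ Nat.card G → r = p ∨ r = q)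
    (hmix : ∀ H : Subgroup G, H ≠ ⊤ → p ∣ Nat.card H → ¬ q ∣ Nat.card H) {A B : Subgroup G}
    (hA : A ≠ ⊤) (hB : B ≠ ⊤) (hpA : p ∣ Nat.card A) (hqB : q ∣ Nat.card B) :
    (Nat.card A).Coprime (Nat.card B) := by
  refine Nat.coprime_of_dvd fun r hr hrA hrB => ?_
  rcases hprimes r hr (hrA.trans A.card_subgroup_dvd_card) with rfl | rfl
  · exact hmix B hB hrB hqB
  · exact hmix A hA hpA hrA

theorem subsingleton_setOf_dvd_card_or (hΓ : (coprimeGraph G).IsPathLike) {p q : ℕ}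
    (hprimes : ∀ r, r.Prime → r ∣ Nat.card G → r = p ∨ r = q)
    (hmix : ∀ H : Subgroup G, H ≠ ⊤ → p ∣ Nat.card H → ¬ q ∣ Nat.card H) :
    {A : {H : Subgroup G // H ≠ ⊥ ∧ H ≠ ⊤} | p ∣ Nat.card A.1}.Subsingleton ∨
      {A : {H : Subgroup G // H ≠ ⊥ ∧ H ≠ ⊤} | q ∣ Nat.card A.1}.Subsingleton := by
  by_contra! h
  obtain ⟨⟨A, hpA, B, hpB, hAB⟩, ⟨C, hqC, D, hqD, hCD⟩⟩ := h
  have hadj {X Y : {H : Subgroup G // H ≠ ⊥ ∧ H ≠ ⊤}} (hX : p ∣ Nat.card X.1)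
      (hY : q ∣ Nat.card Y.1) : (coprimeGraph G).Adj X Y :=
    coprimeGraph_adj_iff.2 (coprime_card_of_dvd_of_dvd hprimes hmix X.2.2 Y.2.2 hX hY)
  exact (hΓ.no_square (hadj hpA hqC) (hadj hpA hqD) (hadj hpB hqC) (hadj hpB hqD)).elim hAB hCD

variable [Finite G]

theorem exists_vertex_card_eq_prime {p q : ℕ} (hp : p.Prime) (hq : q.Prime) (hpq : p ≠ q)
    (hpG : p ∣ Nat.card G) (hqG : q ∣ Nat.card G) :
    ∃ H : {H : Subgroup G // H ≠ ⊥ ∧ H ≠ ⊤}, Nat.card H.1 = p := by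
  have := Fact.mk hp
  obtain ⟨H, hH⟩ := Sylow.exists_subgroup_card_pow_prime p (n := 1) (by rwa [pow_one])
  rw [pow_one] at hH
  exact ⟨⟨H, Subgroup.ne_bot_of_prime_dvd_card hp hH.symm.dvd, Subgroup.ne_top_of_not_dvd_card hqG
    (hH ▸ fun h => hpq ((Nat.prime_dvd_prime_iff_eq hq hp).1 h).symm)⟩, hH⟩

theorem eq_or_eq_of_prime_dvd_card (hΓ : (coprimeGraph G).IsPathLike) {p q r : ℕ}
    (hp : p.Prime) (hq : q.Prime) (hr : r.Prime) (hpq : p ≠ q) (hpG : p ∣ Nat.card G)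
    (hqG : q ∣ Nat.card G) (hrG : r ∣ Nat.card G) : r = p ∨ r = q := by
  by_contra! h
  obtain ⟨A, hA⟩ := exists_vertex_card_eq_prime hp hq hpq hpG hqG
  obtain ⟨B, hB⟩ := exists_vertex_card_eq_prime hq hp hpq.symm hqG hpG
  obtain ⟨C, hC⟩ := exists_vertex_card_eq_prime hr hp h.1 hrG hpG
  have hadj {X Y : {H : Subgroup G // H ≠ ⊥ ∧ H ≠ ⊤}} {s t : ℕ} (hs : s.Prime) (ht : t.Prime)
      (hst : s ≠ t) (hX : Nat.card X.1 = s) (hY : Nat.card Y.1 = t) : (coprimeGraph G).Adj X Y :=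
    coprimeGraph_adj_iff.2 (hX ▸ hY ▸ (Nat.coprime_primes hs ht).2 hst)
  exact hΓ.no_triangle (hadj hp hq hpq hA hB) (hadj hp hr (Ne.symm h.1) hA hC)
    (hadj hq hr (Ne.symm h.2) hB hC)

theorem subsingleton_sylow_of_subsingleton_setOf {p q : ℕ} [Fact p.Prime] (hq : q.Prime)
    (hpq : p ≠ q) (hpG : p ∣ Nat.card G) (hqG : q ∣ Nat.card G)
    (huniq : {A : {H : Subgroup G // H ≠ ⊥ ∧ H ≠ ⊤} | p ∣ Nat.card A.1}.Subsingleton) :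
    Subsingleton (Sylow p G) where
  allEq S T := Sylow.ext <| congrArg Subtype.val <|
    huniq (x := ⟨S, S.coe_ne_bot_and_ne_top hq hpq hpG hqG⟩) (S.dvd_card_of_dvd_card hpG)
      (y := ⟨T, T.coe_ne_bot_and_ne_top hq hpq hpG hqG⟩) (T.dvd_card_of_dvd_card hpG)

theorem card_sylow_eq_of_subsingleton_setOf {p q : ℕ} [Fact p.Prime] (hq : q.Prime)
    (hpq : p ≠ q) (hpG : p ∣ Nat.card G) (hqG : q ∣ Nat.card G)
    (huniq : {A : {H : Subgroup G // H ≠ ⊥ ∧ H ≠ ⊤} | p ∣ Nat.card A.1}.Subsingleton)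
    (P : Sylow p G) : Nat.card P = p := by
  obtain ⟨C, hC⟩ := exists_vertex_card_eq_prime Fact.out hq hpq hpG hqG
  have hPC := huniq (x := ⟨P, P.coe_ne_bot_and_ne_top hq hpq hpG hqG⟩)
    (P.dvd_card_of_dvd_card hpG) (y := C) hC.symm.dvd
  rwa [← hPC] at hC

theorem not_sq_dvd_card_of_normal {p q : ℕ} (hp : p.Prime) [Fact q.Prime] (hpq : p ≠ q)
    (hmix : ∀ H : Subgroup G, H ≠ ⊤ → p ∣ Nat.card H → ¬ q ∣ Nat.card H)
    (P : Subgroup G) [P.Normal] (hP : Nat.card P = p) : ¬ q ^ 2 ∣ Nat.card G := by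
  intro hq
  rw [P.card_eq_card_quotient_mul_card_subgroup, hP] at hq
  have hqp := Nat.Coprime.pow_left 2 ((Nat.coprime_primes Fact.out hp).2 hpq.symm)
  obtain ⟨M, hM, hPM, hqM⟩ := Subgroup.exists_ne_top_le_and_dvd_card (hqp.dvd_of_dvd_mul_right hq)
  exact hmix M hM (hP ▸ Subgroup.card_dvd_of_le hPM) hqM

theorem subsingleton_sylow_of_isPathLike (hΓ : (coprimeGraph G).IsPathLike) {p q : ℕ}
    (hp : p.Prime) [Fact q.Prime] (hpq : p ≠ q) (hpG : p ∣ Nat.card G) (hqG : q ∣ Nat.card G)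
    (hprimes : ∀ r, r.Prime → r ∣ Nat.card G → r = p ∨ r = q)
    (hmix : ∀ H : Subgroup G, H ≠ ⊤ → p ∣ Nat.card H → ¬ q ∣ Nat.card H)
    (P : {H : Subgroup G // H ≠ ⊥ ∧ H ≠ ⊤}) (hP : p ∣ Nat.card P.1) :
    Subsingleton (Sylow q G) := by
  have hvert (S : Sylow q G) := S.coe_ne_bot_and_ne_top hp hpq.symm hqG hpG
  have hadj (S : Sylow q G) : (coprimeGraph G).Adj P ⟨S, hvert S⟩ := coprimeGraph_adj_iff.2 <|
    coprime_card_of_dvd_of_dvd hprimes hmix P.2.2 (hvert S).2 hP (S.dvd_card_of_dvd_card hqG)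
  refine Sylow.subsingleton_of_forall_eq_or_eq_or_eq fun S T U => ?_
  simpa [Sylow.ext_iff] using hΓ.no_claw (hadj S) (hadj T) (hadj U)

theorem isCyclic_and_card_eq_of_subsingleton_setOf (hΓ : (coprimeGraph G).IsPathLike)
    {p q : ℕ} (hp : p.Prime) (hq : q.Prime) (hpq : p ≠ q) (hpG : p ∣ Nat.card G)
    (hqG : q ∣ Nat.card G) (hprimes : ∀ r, r.Prime → r ∣ Nat.card G → r = p ∨ r = q)
    (hmix : ∀ H : Subgroup G, H ≠ ⊤ → p ∣ Nat.card H → ¬ q ∣ Nat.card H)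
    (huniq : {A : {H : Subgroup G // H ≠ ⊥ ∧ H ≠ ⊤} | p ∣ Nat.card A.1}.Subsingleton) :
    IsCyclic G ∧ Nat.card G = p * q := by
  have := Fact.mk hp
  have := Fact.mk hq
  have := subsingleton_sylow_of_subsingleton_setOf hq hpq hpG hqG huniq
  let P : Sylow p G := default
  have hP := card_sylow_eq_of_subsingleton_setOf hq hpq hpG hqG huniq P
  have := P.normal_of_subsingleton
  have hpp : ¬ p ^ 2 ∣ Nat.card G := fun h =>
    hp.not_sq_dvd_self (by simpa [hP] using P.pow_dvd_card_of_pow_dvd_card h)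
  have hqq := not_sq_dvd_card_of_normal hp hpq hmix P hP
  have hG := Nat.eq_mul_of_not_sq_dvd hp hq hpq hprimes hpG hqG hpp hqq
  have := subsingleton_sylow_of_isPathLike hΓ hp hpq hpG hqG hprimes hmix
    ⟨P, P.coe_ne_bot_and_ne_top hq hpq hpG hqG⟩ hP.symm.dvd
  exact ⟨isCyclic_of_subsingleton_sylow hpq hG, hG⟩

theorem nonempty_coprimeGraph_iso_pathGraph_two [IsCyclic G] {p q : ℕ} (hp : p.Prime)
    (hq : q.Prime) (hpq : p ≠ q) (hG : Nat.card G = p * q) :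
    Nonempty (coprimeGraph G ≃g pathGraph 2) := by
  have hcard (A : {H : Subgroup G // H ≠ ⊥ ∧ H ≠ ⊤}) : Nat.card A.1 = p ∨ Nat.card A.1 = q :=
    Nat.eq_or_eq_of_dvd_prime_mul hp hq (hG ▸ A.1.card_subgroup_dvd_card)
      (mt Subgroup.card_eq_one.1 A.2.1) (hG ▸ mt (Subgroup.card_eq_iff_eq_top _).1 A.2.2)
  have hinj {A B : {H : Subgroup G // H ≠ ⊥ ∧ H ≠ ⊤}} (h : Nat.card A.1 = Nat.card B.1) :
      A = B :=
    Subtype.ext (IsCyclic.subgroup_eq_of_card_eq h)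
  have htop : coprimeGraph G = ⊤ := by
    ext A B
    refine ⟨(coprimeGraph G).ne_of_adj, fun hAB => coprimeGraph_adj_iff.2 ?_⟩
    have hpq' := (Nat.coprime_primes hp hq).2 hpq
    rcases hcard A with hA | hA <;> rcases hcard B with hB | hB <;> rw [hA, hB]
    exacts [absurd (hinj (hA.trans hB.symm)) hAB, hpq', hpq'.symm,
      absurd (hinj (hA.trans hB.symm)) hAB]
  have hpG : p ∣ Nat.card G := hG ▸ dvd_mul_right p q
  have hqG : q ∣ Nat.card G := hG ▸ dvd_mul_left q p
  obtain ⟨P, hP⟩ := exists_vertex_card_eq_prime hp hq hpq hpG hqG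
  obtain ⟨Q, hQ⟩ := exists_vertex_card_eq_prime hq hp hpq.symm hqG hpG
  have hV : Nat.card {H : Subgroup G // H ≠ ⊥ ∧ H ≠ ⊤} = 2 := by
    refine Nat.card_eq_two_iff.2 ⟨P, Q, fun h => hpq (hP.symm.trans (h ▸ hQ)), ?_⟩
    refine Set.eq_univ_of_forall fun A => ?_
    rcases hcard A with hA | hA
    exacts [Or.inl (hinj (hA.trans hP.symm)), Or.inr (hinj (hA.trans hQ.symm))]
  rw [htop, pathGraph_two_eq_top]
  exact ⟨Iso.completeGraph (Finite.equivFinOfCardEq hV)⟩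

end CoprimeGraph

theorem coprimeGraph_path_iff {G : Type*} [Group G] [Finite G] :
    (∃ n : ℕ, 2 ≤ n ∧ Nonempty (coprimeGraph G ≃g SimpleGraph.pathGraph n)) ↔
      (IsCyclic G ∧ ∃ p q : ℕ, p.Prime ∧ q.Prime ∧ p ≠ q ∧ Nat.card G = p * q) := by
  constructor
  · rintro ⟨n, hn, ⟨e⟩⟩
    have hΓ := (isPathLike_pathGraph hn).of_iso e
    obtain ⟨p, q, hp, hq, hpq, hpG, hqG⟩ := exists_primes_dvd_card_of_isPathLike hΓ
    have hprimes (r : ℕ) (hr : r.Prime) (hrG : r ∣ Nat.card G) :=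
      eq_or_eq_of_prime_dvd_card hΓ hp hq hr hpq hpG hqG hrG
    have hmix (H : Subgroup G) (hH : H ≠ ⊤) := not_dvd_card_of_dvd_card hΓ hp hprimes hH
    rcases subsingleton_setOf_dvd_card_or hΓ hprimes hmix with huniq | huniq
    · obtain ⟨hcyc, hG⟩ := isCyclic_and_card_eq_of_subsingleton_setOf hΓ hp hq hpq hpG hqG
        hprimes hmix huniq
      exact ⟨hcyc, p, q, hp, hq, hpq, hG⟩
    · obtain ⟨hcyc, hG⟩ := isCyclic_and_card_eq_of_subsingleton_setOf hΓ hq hp hpq.symm hqG hpG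
        (fun r hr hrG => (hprimes r hr hrG).symm) (fun H hH hqH hpH => hmix H hH hpH hqH) huniq
      exact ⟨hcyc, q, p, hq, hp, hpq.symm, hG⟩
  · rintro ⟨hcyc, p, q, hp, hq, hpq, hG⟩
    exact ⟨2, le_rfl, nonempty_coprimeGraph_iso_pathGraph_two hp hq hpq hG⟩
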